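/- Let G be a Ricci-flat graph in which no edge has both endpoints of degree 2. Then every edge of G is contained in some cycle of length 3, 4, or 5. -/

import Mathlib

open scoped BigOperators

namespace RicciFlatPaper

variable {V : Type*}

/-- Degree of a vertex (as the number of neighbors). -/
noncomputable def deg (G : SimpleGraph V) (v : V) : ℕ := (G.neighborSet v).ncard

/-- A graph is locally finite if every vertex has finitely many neighbors. -/
def LocFin (G : SimpleGraph V) : Prop := ∀ v : V, (G.neighborSet v).Finite

/-- A finitely supported probability distribution on the vertex set. -/
def IsProbDist (μ : V → ℝ) : Prop :=
  (∀ v, 0 ≤ μ v) ∧ (Function.support μ).Finite ∧ ∑ᶠ v, μ v = 1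

/-- A (finitely supported) coupling between two distributions. -/
def IsCoupling (μ₁ μ₂ : V → ℝ) (A : V → V → ℝ) : Prop :=
  (∀ x y, 0 ≤ A x y) ∧ (Function.support fun p : V × V => A p.1 p.2).Finite ∧
  (∀ x, ∑ᶠ y, A x y = μ₁ x) ∧ (∀ y, ∑ᶠ x, A x y = μ₂ y)

/-- Transportation cost of a coupling with respect to the graph distance. -/
noncomputable def cost (G : SimpleGraph V) (A : V → V → ℝ) : ℝ :=
  ∑ᶠ p : V × V, A p.1 p.2 * (G.dist p.1 p.2 : ℝ)

/-- The transportation (Wasserstein) distance between two distributions. -/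
noncomputable def W (G : SimpleGraph V) (μ₁ μ₂ : V → ℝ) : ℝ :=
  sInf {c : ℝ | ∃ A : V → V → ℝ, IsCoupling μ₁ μ₂ A ∧ c = cost G A}

open Classical in
/-- The lazy neighborhood measure `μ_x^α`. -/
noncomputable def mu (G : SimpleGraph V) (α : ℝ) (x : V) : V → ℝ :=
  fun z => if z = x then α else if G.Adj x z then (1 - α) / (deg G x : ℝ) else 0

/-- The `α`-Ollivier–Ricci curvature `k_α(x,y) = 1 - W(μ_x^α, μ_y^α)`. -/
noncomputable def kIdle (G : SimpleGraph V) (α : ℝ) (x y : V) : ℝ :=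
  1 - W G (mu G α x) (mu G α y)

/-- `HasRicci G x y k` means the Lin–Lu–Yau curvature `k(x,y) = lim_{α→1} k_α(x,y)/(1-α)`
exists and equals `k`. -/
def HasRicci (G : SimpleGraph V) (x y : V) (k : ℝ) : Prop :=
  Filter.Tendsto (fun α : ℝ => kIdle G α x y / (1 - α))
    (nhdsWithin (1 : ℝ) (Set.Iio (1 : ℝ))) (nhds k)

/-- A graph is Ricci-flat if the Lin–Lu–Yau curvature vanishes on every edge. -/
def RicciFlat (G : SimpleGraph V) : Prop := ∀ x y : V, G.Adj x y → HasRicci G x y 0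

/-- `f` is 1-Lipschitz with respect to the graph distance. -/
def Lip1 (G : SimpleGraph V) (f : V → ℝ) : Prop :=
  ∀ u v : V, f u - f v ≤ (G.dist u v : ℝ)

/-- The edge `(x,y)` is contained in some cycle of length `n`. -/
def EdgeInCycle (G : SimpleGraph V) (n : ℕ) (x y : V) : Prop :=
  ∃ (u : V) (w : G.Walk u u), w.IsCycle ∧ w.length = n ∧ s(x, y) ∈ w.edges

end RicciFlatPaper

namespace RicciFlatPaper

variable {V : Type*}

open Function

section Infra

variable {G : SimpleGraph V}

lemma cost_eq_sum {A : V → V → ℝ} {s : Finset V}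
    (hs : ∀ u v, A u v ≠ 0 → u ∈ s ∧ v ∈ s) :
    cost G A = ∑ u ∈ s, ∑ v ∈ s, A u v * (G.dist u v : ℝ) := by
  rw [cost, finsum_eq_sum_of_support_subset _ (s := s ×ˢ s) ?_, Finset.sum_product]
  intro p hp
  have : A p.1 p.2 ≠ 0 := by
    intro h; simp [Function.mem_support, h] at hp
  exact Finset.mem_product.2 ⟨(hs _ _ this).1, (hs _ _ this).2⟩

lemma cost_nonneg {A : V → V → ℝ} (h : ∀ u v, 0 ≤ A u v) : 0 ≤ cost G A :=
  finsum_nonneg fun p => mul_nonneg (h _ _) (by positivity)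

lemma coupling_mem_support {μ1 μ2 : V → ℝ} {A : V → V → ℝ} (hA : IsCoupling μ1 μ2 A) :
    ∃ s : Finset V, ∀ u v, A u v ≠ 0 → u ∈ s ∧ v ∈ s := by
  classical
  refine ⟨hA.2.1.toFinset.image Prod.fst ∪ hA.2.1.toFinset.image Prod.snd, fun u v h => ?_⟩
  have hm : (u, v) ∈ hA.2.1.toFinset := by simpa [Function.mem_support] using h
  constructor
  · exact Finset.mem_union_left _ (Finset.mem_image.2 ⟨(u,v), hm, rfl⟩)
  · exact Finset.mem_union_right _ (Finset.mem_image.2 ⟨(u,v), hm, rfl⟩)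

lemma row_sum {A : V → V → ℝ} {s : Finset V}
    (hs : ∀ u v, A u v ≠ 0 → u ∈ s ∧ v ∈ s) (x : V) :
    ∑ᶠ y, A x y = ∑ y ∈ s, A x y :=
  finsum_eq_sum_of_support_subset _ (fun y hy => (hs x y hy).2)

lemma col_sum {A : V → V → ℝ} {s : Finset V}
    (hs : ∀ u v, A u v ≠ 0 → u ∈ s ∧ v ∈ s) (y : V) :
    ∑ᶠ x, A x y = ∑ x ∈ s, A x y :=
  finsum_eq_sum_of_support_subset _ (fun x hx => (hs x y hx).1)

lemma mu1_support {μ1 μ2 : V → ℝ} {A : V → V → ℝ} (hA : IsCoupling μ1 μ2 A)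
    {s : Finset V} (hs : ∀ u v, A u v ≠ 0 → u ∈ s ∧ v ∈ s) :
    ∀ x ∉ s, μ1 x = 0 := by
  intro x hx
  rw [← hA.2.2.1 x, row_sum hs]
  refine Finset.sum_eq_zero fun y _ => ?_
  by_contra h
  exact hx (hs x y h).1

lemma mu2_support {μ1 μ2 : V → ℝ} {A : V → V → ℝ} (hA : IsCoupling μ1 μ2 A)
    {s : Finset V} (hs : ∀ u v, A u v ≠ 0 → u ∈ s ∧ v ∈ s) :
    ∀ y ∉ s, μ2 y = 0 := by
  intro y hy
  rw [← hA.2.2.2 y, col_sum hs]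
  refine Finset.sum_eq_zero fun x _ => ?_
  by_contra h
  exact hy (hs x y h).2

lemma coupling_total {μ1 μ2 : V → ℝ} {A : V → V → ℝ} (hA : IsCoupling μ1 μ2 A) :
    ∑ᶠ v, μ1 v = ∑ᶠ v, μ2 v := by
  obtain ⟨s, hs⟩ := coupling_mem_support hA
  rw [finsum_eq_sum_of_support_subset μ1 (s := s) ?_,
      finsum_eq_sum_of_support_subset μ2 (s := s) ?_]
  · calc ∑ x ∈ s, μ1 x = ∑ x ∈ s, ∑ y ∈ s, A x y := by
          refine Finset.sum_congr rfl fun x _ => ?_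
          rw [← hA.2.2.1 x, row_sum hs]
      _ = ∑ y ∈ s, ∑ x ∈ s, A x y := Finset.sum_comm
      _ = ∑ y ∈ s, μ2 y := by
          refine Finset.sum_congr rfl fun y _ => ?_
          rw [← hA.2.2.2 y, col_sum hs]
  · intro y hy; by_contra h
    exact hy (mu2_support hA hs y (by simpa using h))
  · intro x hx; by_contra h
    exact hx (mu1_support hA hs x (by simpa using h))

lemma duality {f : V → ℝ} (hf : Lip1 G f) {μ1 μ2 : V → ℝ} {A : V → V → ℝ}
    (hA : IsCoupling μ1 μ2 A) :
    (∑ᶠ v, f v * μ1 v) - (∑ᶠ v, f v * μ2 v) ≤ cost G A := by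
  obtain ⟨s, hs⟩ := coupling_mem_support hA
  have h1 : ∑ᶠ v, f v * μ1 v = ∑ x ∈ s, ∑ y ∈ s, f x * A x y := by
    rw [finsum_eq_sum_of_support_subset _ (s := s) ?_]
    · refine Finset.sum_congr rfl fun x _ => ?_
      rw [← Finset.mul_sum, ← row_sum hs, hA.2.2.1 x]
    · intro x hx
      simp only [Function.mem_support, ne_eq] at hx
      by_contra hxs
      exact hx (by rw [mu1_support hA hs x (by simpa using hxs), mul_zero])
  have h2 : ∑ᶠ v, f v * μ2 v = ∑ x ∈ s, ∑ y ∈ s, f y * A x y := by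
    rw [finsum_eq_sum_of_support_subset _ (s := s) ?_]
    · rw [Finset.sum_comm]
      refine Finset.sum_congr rfl fun y _ => ?_
      rw [← Finset.mul_sum, ← col_sum hs, hA.2.2.2 y]
    · intro y hy
      simp only [Function.mem_support, ne_eq] at hy
      by_contra hys
      exact hy (by rw [mu2_support hA hs y (by simpa using hys), mul_zero])
  rw [h1, h2, cost_eq_sum hs, ← Finset.sum_sub_distrib]
  refine Finset.sum_le_sum fun x _ => ?_
  rw [← Finset.sum_sub_distrib]
  refine Finset.sum_le_sum fun y _ => ?_
  rw [← sub_mul, mul_comm (A x y)]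
  exact mul_le_mul_of_nonneg_right (hf x y) (hA.1 x y)

lemma W_le_cost {μ1 μ2 : V → ℝ} {A : V → V → ℝ} (hA : IsCoupling μ1 μ2 A) :
    W G μ1 μ2 ≤ cost G A := by
  refine csInf_le ⟨0, ?_⟩ ⟨A, hA, rfl⟩
  rintro c ⟨B, hB, rfl⟩
  exact cost_nonneg hB.1

lemma le_W {f : V → ℝ} (hf : Lip1 G f) {μ1 μ2 : V → ℝ} {A : V → V → ℝ}
    (hA : IsCoupling μ1 μ2 A) :
    (∑ᶠ v, f v * μ1 v) - (∑ᶠ v, f v * μ2 v) ≤ W G μ1 μ2 := by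
  refine le_csInf ⟨cost G A, A, hA, rfl⟩ ?_
  rintro c ⟨B, hB, rfl⟩
  exact duality hf hB

end Infra

end RicciFlatPaper
namespace RicciFlatPaper

variable {V : Type*}

open Function

section Mu

variable {G : SimpleGraph V} {α : ℝ} {x : V}

lemma deg_eq_card (hfin : (G.neighborSet x).Finite) :
    deg G x = hfin.toFinset.card := by
  rw [deg, Set.ncard_eq_toFinset_card _ hfin]

lemma finsum_mul_mu (hfin : (G.neighborSet x).Finite) (f : V → ℝ) :
    ∑ᶠ z, f z * mu G α x z
      = α * f x + ((1 - α) / (deg G x : ℝ)) * ∑ z ∈ hfin.toFinset, f z := by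
  classical
  have hxN : x ∉ hfin.toFinset := by simp [SimpleGraph.irrefl]
  rw [finsum_eq_sum_of_support_subset _ (s := insert x hfin.toFinset) ?_]
  · rw [Finset.sum_insert hxN]
    have h1 : f x * mu G α x x = α * f x := by
      rw [mu]; simp [mul_comm]
    have h2 : ∀ z ∈ hfin.toFinset, f z * mu G α x z = ((1 - α) / (deg G x : ℝ)) * f z := by
      intro z hz
      have hadj : G.Adj x z := by simpa using hz
      rw [mu, if_neg (fun h => hadj.ne' h), if_pos hadj, mul_comm]
    rw [h1, Finset.sum_congr rfl h2, ← Finset.mul_sum]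
  · intro z hz
    simp only [Function.mem_support, ne_eq] at hz
    by_contra hzs
    simp only [Finset.coe_insert, Set.mem_insert_iff, Finset.mem_coe,
      Set.Finite.mem_toFinset, SimpleGraph.mem_neighborSet] at hzs
    push_neg at hzs
    apply hz
    rw [mu, if_neg hzs.1, if_neg hzs.2, mul_zero]

lemma mu_total_fin (hfin : (G.neighborSet x).Finite) (hne : (G.neighborSet x).Nonempty) :
    ∑ᶠ z, mu G α x z = 1 := by
  have hd : (deg G x : ℝ) ≠ 0 := by
    rw [deg_eq_card hfin]
    simp only [ne_eq, Nat.cast_eq_zero, Finset.card_eq_zero]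
    intro h
    rw [← Set.Finite.coe_toFinset hfin, h] at hne
    simp at hne
  have := finsum_mul_mu (G := G) (α := α) hfin (fun _ => 1)
  simp only [one_mul, mul_one] at this
  rw [this, Finset.sum_const, ← deg_eq_card hfin]
  field_simp
  rw [nsmul_eq_mul, mul_one]; ring

lemma mu_total_inf (hinf : (G.neighborSet x).Infinite) :
    ∑ᶠ z, mu G α x z = α := by
  have hd : deg G x = 0 := hinf.ncard
  rw [finsum_eq_single _ x ?_]
  · rw [mu]; simp
  · intro z hz
    rw [mu, if_neg hz, hd]
    simp

lemma mu_nonneg (hα : 0 ≤ α) (hα1 : α ≤ 1) (z : V) : 0 ≤ mu G α x z := by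
  rw [mu]
  split
  · exact hα
  split
  · apply div_nonneg (by linarith) (by positivity)
  · exact le_refl 0

lemma mu_support_fin (hfin : (G.neighborSet x).Finite) :
    (Function.support (mu G α x)).Finite := by
  refine Set.Finite.subset (hfin.insert x) ?_
  intro z hz
  simp only [Function.mem_support, ne_eq] at hz
  by_contra h
  simp only [Set.mem_insert_iff, SimpleGraph.mem_neighborSet] at h
  push_neg at h
  exact hz (by rw [mu, if_neg h.1, if_neg h.2])

lemma mu_isProbDist (hfin : (G.neighborSet x).Finite) (hne : (G.neighborSet x).Nonempty)
    (hα : 0 ≤ α) (hα1 : α ≤ 1) : IsProbDist (mu G α x) :=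
  ⟨mu_nonneg hα hα1, mu_support_fin hfin, mu_total_fin hfin hne⟩

lemma prod_coupling {μ1 μ2 : V → ℝ} (h1 : IsProbDist μ1) (h2 : IsProbDist μ2) :
    IsCoupling μ1 μ2 (fun u v => μ1 u * μ2 v) := by
  obtain ⟨h1n, h1f, h1t⟩ := h1
  obtain ⟨h2n, h2f, h2t⟩ := h2
  refine ⟨fun u v => mul_nonneg (h1n u) (h2n v), ?_, ?_, ?_⟩
  · refine Set.Finite.subset (h1f.prod h2f) ?_
    rintro ⟨u, v⟩ h
    simp only [Function.mem_support, ne_eq, mul_eq_zero] at h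
    push_neg at h
    exact ⟨h.1, h.2⟩
  · intro u
    simp only []
    rw [← mul_finsum _ _, h2t, mul_one]
  · intro v
    have : ∀ u, μ1 u * μ2 v = μ2 v * μ1 u := fun u => mul_comm _ _
    rw [finsum_congr this, ← mul_finsum _ _, h1t, mul_one]

end Mu

end RicciFlatPaper
namespace RicciFlatPaper

variable {V : Type*}

open SimpleGraph Walk

section Cycles

variable {G : SimpleGraph V} {x y z a b w : V}

lemma edgeInCycle3 (h1 : G.Adj x y) (h2 : G.Adj y z) (h3 : G.Adj z x) :
    EdgeInCycle G 3 x y := by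
  have n1 := h1.ne; have n1' := h1.ne'; have n2 := h2.ne; have n2' := h2.ne'
  have n3 := h3.ne; have n3' := h3.ne'
  refine ⟨x, Walk.cons h1 (Walk.cons h2 (Walk.cons h3 Walk.nil)), ?_, by simp, by simp⟩
  rw [Walk.isCycle_def]
  refine ⟨?_, by simp, ?_⟩
  · rw [Walk.isTrail_def]
    simp [Sym2.eq_iff]
    tauto
  · simp [Sym2.eq_iff]
    tauto

lemma edgeInCycle4 (hxy : G.Adj x y) (hyb : G.Adj y b) (hba : G.Adj b a) (hax : G.Adj a x)
    (hay : a ≠ y) (hbx : b ≠ x) : EdgeInCycle G 4 x y := by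
  have n1 := hxy.ne; have n1' := hxy.ne'; have n2 := hyb.ne; have n2' := hyb.ne'
  have n3 := hba.ne; have n3' := hba.ne'; have n4 := hax.ne; have n4' := hax.ne'
  have n5 := hay.symm; have n6 := hbx.symm
  refine ⟨x, Walk.cons hxy (Walk.cons hyb (Walk.cons hba (Walk.cons hax Walk.nil))), ?_,
    by simp, by simp⟩
  rw [Walk.isCycle_def]
  refine ⟨?_, by simp, ?_⟩
  · rw [Walk.isTrail_def]
    simp [Sym2.eq_iff]
    tauto
  · simp [Sym2.eq_iff]
    tauto

lemma edgeInCycle5 (hxy : G.Adj x y) (hyb : G.Adj y b) (hbw : G.Adj b w) (hwa : G.Adj w a)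
    (hax : G.Adj a x) (hay : a ≠ y) (hbx : b ≠ x) (hab : a ≠ b) (hwx : w ≠ x) (hwy : w ≠ y) :
    EdgeInCycle G 5 x y := by
  have n1 := hxy.ne; have n1' := hxy.ne'; have n2 := hyb.ne; have n2' := hyb.ne'
  have n3 := hbw.ne; have n3' := hbw.ne'; have n4 := hwa.ne; have n4' := hwa.ne'
  have n5 := hax.ne; have n5' := hax.ne'
  have n6 := hay.symm; have n7 := hbx.symm; have n8 := hab.symm
  have n9 := hwx.symm; have n10 := hwy.symm
  refine ⟨x, Walk.cons hxy (Walk.cons hyb (Walk.cons hbw (Walk.cons hwa (Walk.cons hax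
    Walk.nil)))), ?_, by simp, by simp⟩
  rw [Walk.isCycle_def]
  refine ⟨?_, by simp, ?_⟩
  · rw [Walk.isTrail_def]
    simp [Sym2.eq_iff]
    tauto
  · simp [Sym2.eq_iff]
    tauto

end Cycles

end RicciFlatPaper
namespace RicciFlatPaper

variable {V : Type*}

open SimpleGraph

section Geom

variable {G : SimpleGraph V} {x y : V}

lemma exists_mid (hG : G.Connected) {u v : V} (h : G.dist u v = 2) :
    ∃ w, G.Adj u w ∧ G.Adj w v := by
  obtain ⟨p, hp⟩ := hG.exists_walk_length_eq_dist u v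
  rw [h] at hp
  cases p with
  | nil => simp at hp
  | cons h₁ q =>
    cases q with
    | nil => simp at hp
    | cons h₂ r =>
      cases r with
      | nil => exact ⟨_, h₁, h₂⟩
      | cons h₃ s => simp [SimpleGraph.Walk.length_cons] at hp

lemma dist_ge_three (hG : G.Connected) (hxy : G.Adj x y)
    (hcyc : ¬ (EdgeInCycle G 3 x y ∨ EdgeInCycle G 4 x y ∨ EdgeInCycle G 5 x y))
    {a b : V} (ha : G.Adj x a) (hay : a ≠ y) (hb : G.Adj y b) (hbx : b ≠ x) :
    3 ≤ G.dist b a := by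
  push_neg at hcyc
  obtain ⟨hc3, hc4, hc5⟩ := hcyc
  have hab : b ≠ a := by
    rintro rfl
    exact hc3 (edgeInCycle3 hxy hb ha.symm)
  have hnadj : ¬ G.Adj b a := fun h => hc4 (edgeInCycle4 hxy hb h ha.symm hay hbx)
  have h0 : G.dist b a ≠ 0 := by
    intro h
    exact hab (hG.dist_eq_zero_iff.mp h)
  have h1 : G.dist b a ≠ 1 := by
    intro h
    exact hnadj (SimpleGraph.dist_eq_one_iff_adj.mp h)
  have h2 : G.dist b a ≠ 2 := by
    intro h
    obtain ⟨w, hbw, hwa⟩ := exists_mid hG h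
    have hwx : w ≠ x := by
      rintro rfl
      exact hc3 (edgeInCycle3 hxy hb hbw)
    have hwy : w ≠ y := by
      rintro rfl
      exact hc3 (edgeInCycle3 hxy hwa ha.symm)
    exact hc5 (edgeInCycle5 hxy hb hbw hwa ha.symm hay hbx (Ne.symm hab) hwx hwy)
  omega

end Geom

section FAux

variable {G : SimpleGraph V} {s : Finset V}

/-- Auxiliary 1-Lipschitz function: `z ↦ max 0 (3 - dist(z, s))`. -/
noncomputable def fAux (G : SimpleGraph V) (s : Finset V) (hs : s.Nonempty) : V → ℝ :=
  fun z => max 0 (3 - (s.inf' hs fun a => G.dist z a : ℕ))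

lemma fAux_nonneg (hs : s.Nonempty) (z : V) : 0 ≤ fAux G s hs z := le_max_left _ _

lemma fAux_lip (hG : G.Connected) (hs : s.Nonempty) : Lip1 G (fAux G s hs) := by
  intro u v
  obtain ⟨a, haA, hau⟩ := Finset.exists_mem_eq_inf' hs (fun a => G.dist u a)
  have h1 : (s.inf' hs fun a => G.dist v a) ≤ G.dist v a := Finset.inf'_le _ haA
  have h2 : G.dist v a ≤ G.dist v u + G.dist u a := hG.dist_triangle
  have hn : (s.inf' hs fun a => G.dist v a) ≤ G.dist u v + (s.inf' hs fun a => G.dist u a) := by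
    rw [hau, SimpleGraph.dist_comm (u := u) (v := v)]
    omega
  have h3 : ((s.inf' hs fun a => G.dist v a : ℕ) : ℝ)
      ≤ (G.dist u v : ℝ) + (s.inf' hs fun a => G.dist u a : ℕ) := by
    exact_mod_cast hn
  rw [fAux, fAux]
  rcases le_or_gt (3 - ((s.inf' hs fun a => G.dist u a : ℕ) : ℝ)) 0 with h | h
  · rw [max_eq_left h]
    have := fAux_nonneg (G := G) hs v
    rw [fAux] at this
    have hd : (0 : ℝ) ≤ G.dist u v := by positivity
    linarith [le_max_left (0:ℝ) (3 - ((s.inf' hs fun a => G.dist v a : ℕ) : ℝ))]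
  · rw [max_eq_right h.le]
    have : (3 : ℝ) - (s.inf' hs fun a => G.dist v a : ℕ)
        ≤ max 0 (3 - ((s.inf' hs fun a => G.dist v a : ℕ) : ℝ)) := le_max_right _ _
    linarith

lemma fAux_eq_of_inf {k : ℕ} (hs : s.Nonempty) {z : V}
    (h : (s.inf' hs fun a => G.dist z a) = k) (hk : k ≤ 3) :
    fAux G s hs z = 3 - k := by
  rw [fAux, h, max_eq_right]
  have : (k : ℝ) ≤ 3 := by exact_mod_cast hk
  linarith

lemma fAux_eq_zero (hs : s.Nonempty) {z : V}
    (h : ∀ a ∈ s, 3 ≤ G.dist z a) :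
    fAux G s hs z = 0 := by
  rw [fAux, max_eq_left]
  have : (3:ℕ) ≤ s.inf' hs fun a => G.dist z a := Finset.le_inf' _ _ h
  have : (3 : ℝ) ≤ (s.inf' hs fun a => G.dist z a : ℕ) := by exact_mod_cast this
  linarith

end FAux

end RicciFlatPaper
namespace RicciFlatPaper

variable {V : Type*}

open SimpleGraph Filter

section Contra

variable {G : SimpleGraph V} {x y : V}

lemma not_hasRicci_zero_of_ratio_ge {c : ℝ} (hc : 0 < c)
    (h : ∀ α : ℝ, 1/2 < α → α < 1 → c ≤ kIdle G α x y / (1 - α)) :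
    ¬ HasRicci G x y 0 := by
  intro ht
  have hev : ∀ᶠ α in nhdsWithin (1:ℝ) (Set.Iio 1), c ≤ kIdle G α x y / (1 - α) := by
    filter_upwards [Ioo_mem_nhdsLT_of_mem
      (by norm_num : (1:ℝ) ∈ Set.Ioc (1/2 : ℝ) 1)] with α hα
    exact h α hα.1 hα.2
  have := ge_of_tendsto ht hev
  linarith

lemma not_hasRicci_zero_of_ratio_le {c : ℝ} (hc : c < 0)
    (h : ∀ α : ℝ, 1/2 < α → α < 1 → kIdle G α x y / (1 - α) ≤ c) :
    ¬ HasRicci G x y 0 := by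
  intro ht
  have hev : ∀ᶠ α in nhdsWithin (1:ℝ) (Set.Iio 1), kIdle G α x y / (1 - α) ≤ c := by
    filter_upwards [Ioo_mem_nhdsLT_of_mem
      (by norm_num : (1:ℝ) ∈ Set.Ioc (1/2 : ℝ) 1)] with α hα
    exact h α hα.1 hα.2
  have := le_of_tendsto ht hev
  linarith

end Contra

section DegenCases

variable {G : SimpleGraph V} {x y : V}

lemma not_flat_of_both_infinite (hG : G.Connected) (hxy : G.Adj x y)
    (hx : (G.neighborSet x).Infinite) (hy : (G.neighborSet y).Infinite) :
    ¬ HasRicci G x y 0 := by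
  classical
  refine not_hasRicci_zero_of_ratio_ge (c := 1) one_pos ?_
  intro α hα2 hα1
  have h1α : (0:ℝ) < 1 - α := by linarith
  have hdx : deg G x = 0 := hx.ncard
  have hdy : deg G y = 0 := hy.ncard
  set A : V → V → ℝ := fun u v => if u = x ∧ v = y then α else 0 with hA
  have hcoup : IsCoupling (mu G α x) (mu G α y) A := by
    refine ⟨?_, ?_, ?_, ?_⟩
    · intro u v; rw [hA]; dsimp only; split
      · linarith
      · exact le_refl 0
    · refine Set.Finite.subset (Set.finite_singleton (x, y)) ?_
      rintro ⟨u, v⟩ h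
      simp only [Function.mem_support, hA, ne_eq, ite_eq_right_iff, not_forall] at h
      obtain ⟨⟨rfl, rfl⟩, -⟩ := h
      rfl
    · intro u
      by_cases hu : u = x
      · subst hu
        rw [finsum_eq_single _ y ?_]
        · simp [hA, mu]
        · intro v hv; simp [hA, hv]
      · rw [finsum_eq_single _ y ?_]
        · simp [hA, hu, mu, hdx]
        · intro v hv; simp [hA, hv, hu]
    · intro v
      by_cases hv : v = y
      · subst hv
        rw [finsum_eq_single _ x ?_]
        · simp [hA, mu]
        · intro u hu; simp [hA, hu]
      · rw [finsum_eq_single _ x ?_]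
        · simp [hA, hv, mu, hdy]
        · intro u hu; simp [hA, hu, hv]
  have hcost : cost G A = α := by
    rw [cost, finsum_eq_single _ (x, y) ?_]
    · simp only [hA, and_self, if_pos, SimpleGraph.dist_eq_one_iff_adj.mpr hxy]
      norm_num
    · rintro ⟨u, v⟩ hp
      have : ¬ (u = x ∧ v = y) := by
        rintro ⟨rfl, rfl⟩; exact hp rfl
      simp [hA, this]
  have hW : W G (mu G α x) (mu G α y) ≤ α := (W_le_cost hcoup).trans hcost.le
  rw [kIdle, le_div_iff₀ h1α, one_mul]
  linarith

lemma not_flat_of_infinite_finite (hG : G.Connected) (hxy : G.Adj x y)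
    (hx : (G.neighborSet x).Infinite) (hy : (G.neighborSet y).Finite) :
    ¬ HasRicci G x y 0 := by
  refine not_hasRicci_zero_of_ratio_ge (c := 1) one_pos ?_
  intro α hα2 hα1
  have h1α : (0:ℝ) < 1 - α := by linarith
  have hne : (G.neighborSet y).Nonempty := ⟨x, hxy.symm⟩
  have hempty : {c : ℝ | ∃ A : V → V → ℝ, IsCoupling (mu G α x) (mu G α y) A ∧ c = cost G A}
      = ∅ := by
    rw [Set.eq_empty_iff_forall_notMem]
    rintro c ⟨A, hA, -⟩
    have := coupling_total hA
    rw [mu_total_inf hx, mu_total_fin hy hne] at this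
    linarith
  rw [kIdle, W, hempty, Real.sInf_empty, sub_zero, le_div_iff₀ h1α, one_mul]
  linarith

end DegenCases

end RicciFlatPaper
namespace RicciFlatPaper

variable {V : Type*}

open SimpleGraph

section DegOne

variable {G : SimpleGraph V} {x y : V}

lemma not_flat_of_deg_one (hG : G.Connected) (hxy : G.Adj x y)
    (hfx : (G.neighborSet x).Finite) (hfy : (G.neighborSet y).Finite)
    (hdx : deg G x = 1) : ¬ HasRicci G x y 0 := by
  classical
  set N : Finset V := hfy.toFinset with hN
  have hxN : x ∈ N := by simp [hN, hxy.symm]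
  have hyN : y ∉ N := by simp [hN]
  set d : ℕ := deg G y with hd
  have hdN : N.card = d := (deg_eq_card hfy).symm
  have hd1 : 1 ≤ d := by
    rw [← hdN]
    exact Finset.card_pos.mpr ⟨x, hxN⟩
  have hdR : (0:ℝ) < d := by exact_mod_cast hd1
  have hNx : hfx.toFinset = {y} := by
    obtain ⟨a, ha⟩ := Finset.card_eq_one.mp (by rw [← deg_eq_card hfx, hdx])
    have : y ∈ hfx.toFinset := by simp [hxy]
    rw [ha] at this ⊢
    simp only [Finset.mem_singleton] at this
    rw [this]
  have hAdjx : ∀ u, G.Adj x u ↔ u = y := by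
    intro u
    rw [← Finset.mem_singleton, ← hNx]
    simp
  refine not_hasRicci_zero_of_ratio_ge (c := 2 / (d:ℝ)) (by positivity) ?_
  intro α hα2 hα1
  have h1α : (0:ℝ) < 1 - α := by linarith
  set e : ℝ := (1 - α) / (d:ℝ) with he
  have he0 : 0 ≤ e := by positivity
  have hed : (d:ℝ) * e = 1 - α := by
    rw [he]; field_simp
  have heα : e < α := by
    have hd1R : (1:ℝ) ≤ (d:ℝ) := by exact_mod_cast hd1
    have h' : e ≤ 1 - α := by
      rw [he, div_le_iff₀ hdR]
      nlinarith [mul_nonneg h1α.le (by linarith : (0:ℝ) ≤ (d:ℝ) - 1)]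
    linarith
  set A : V → V → ℝ := fun u v =>
    if u = x then (if v = x then e else if v = y then α - e else 0)
    else if u = y then (if v = y then e else if v = x then 0 else if G.Adj y v then e else 0)
    else 0 with hA
  have hxy' : x ≠ y := hxy.ne
  have hyx' : y ≠ x := hxy.ne'
  -- pointwise values
  have hAxx : A x x = e := by simp [hA]
  have hAxy : A x y = α - e := by simp [hA, hyx']
  have hAyy : A y y = e := by simp [hA, hyx']
  have hAyx : A y x = 0 := by simp [hA, hyx', hxy']
  have hAxv : ∀ v, v ≠ x → v ≠ y → A x v = 0 := fun v h1 h2 => by simp [hA, h1, h2]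
  have hAyv : ∀ v, v ≠ x → v ≠ y → A y v = if G.Adj y v then e else 0 := fun v h1 h2 => by
    simp [hA, hyx', h1, h2]
  have hAuv : ∀ u v, u ≠ x → u ≠ y → A u v = 0 := fun u v h1 h2 => by simp [hA, h1, h2]
  -- values of mu
  have hmxx : mu G α x x = α := by simp [mu]
  have hmxy : mu G α x y = 1 - α := by
    rw [mu, if_neg hyx', if_pos hxy, hdx]
    norm_num
  have hmxu : ∀ u, u ≠ x → u ≠ y → mu G α x u = 0 := by
    intro u h1 h2
    rw [mu, if_neg h1, if_neg (fun h => h2 ((hAdjx u).mp h))]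
  have hmyy : mu G α y y = α := by simp [mu]
  have hmyv : ∀ v, v ≠ y → mu G α y v = if G.Adj y v then e else 0 := by
    intro v h1
    rw [mu, if_neg h1, he, hd]
  have hmyx : mu G α y x = e := by rw [hmyv x hxy', if_pos hxy.symm]
  -- sum over N of row y entries
  have hsumNy : ∑ v ∈ N, A y v = ((d:ℝ) - 1) * e := by
    have hterm : ∀ v ∈ N, A y v = if v = x then 0 else e := by
      intro v hv
      have hvy : v ≠ y := by rintro rfl; exact hyN hv
      have hadj : G.Adj y v := by simpa [hN] using hv
      by_cases hvx : v = x
      · rw [if_pos hvx, hvx, hAyx]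
      · rw [if_neg hvx, hAyv v hvx hvy, if_pos hadj]
    rw [Finset.sum_congr rfl hterm, ← Finset.add_sum_erase _ _ hxN, if_pos rfl, zero_add]
    have h2 : ∀ v ∈ N.erase x, (if v = x then (0:ℝ) else e) = e := fun v hv =>
      if_neg (Finset.ne_of_mem_erase hv)
    rw [Finset.sum_congr rfl h2, Finset.sum_const, Finset.card_erase_of_mem hxN, hdN,
      nsmul_eq_mul]
    push_cast [Nat.cast_sub hd1]
    ring
  have hcoup : IsCoupling (mu G α x) (mu G α y) A := by
    refine ⟨?_, ?_, ?_, ?_⟩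
    · intro u v
      rw [hA]; dsimp only
      split
      · split
        · exact he0
        split
        · linarith
        · exact le_refl 0
      split
      · split
        · exact he0
        split
        · exact le_refl 0
        split
        · exact he0
        · exact le_refl 0
      · exact le_refl 0
    · refine Set.Finite.subset (Finset.finite_toSet (({x, y} : Finset V) ×ˢ insert y N)) ?_
      rintro ⟨u, v⟩ h
      simp only [Function.mem_support, ne_eq] at h
      simp only [Finset.coe_product, Set.mem_prod, Finset.mem_coe, Finset.mem_insert,
        Finset.mem_singleton]
      by_cases hu : u = x
      · rw [hu] at h
        refine ⟨Or.inl hu, ?_⟩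
        by_cases hv : v = x
        · right; rw [hv]; exact hxN
        by_cases hv' : v = y
        · left; exact hv'
        · exact absurd (hAxv v hv hv') h
      · by_cases hu' : u = y
        · rw [hu'] at h
          refine ⟨Or.inr hu', ?_⟩
          by_cases hv' : v = y
          · left; exact hv'
          by_cases hv : v = x
          · right; rw [hv]; exact hxN
          · rw [hAyv v hv hv'] at h
            right
            by_cases hadj : G.Adj y v
            · simp [hN, hadj]
            · rw [if_neg hadj] at h; exact absurd rfl h
        · exact absurd (hAuv u v hu hu') h
    · intro u
      by_cases hu : u = x
      · rw [hu, finsum_eq_sum_of_support_subset _ (s := {x, y}) ?_]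
        · rw [Finset.sum_pair hxy', hAxx, hAxy, hmxx]; ring
        · intro v hv
          simp only [Function.mem_support, ne_eq] at hv
          simp only [Finset.coe_insert, Set.mem_insert_iff, Finset.mem_coe,
            Finset.mem_singleton]
          by_contra hc
          push_neg at hc
          exact hv (hAxv v hc.1 hc.2)
      · by_cases hu' : u = y
        · rw [hu', finsum_eq_sum_of_support_subset _ (s := insert y N) ?_]
          · rw [Finset.sum_insert hyN, hAyy, hsumNy, hmxy]
            linarith [hed]
          · intro v hv
            simp only [Function.mem_support, ne_eq] at hv
            simp only [Finset.coe_insert, Set.mem_insert_iff, Finset.mem_coe]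
            by_contra hc
            push_neg at hc
            by_cases hvx : v = x
            · exact hc.2 (by rw [hvx]; exact hxN)
            rw [hAyv v hvx hc.1] at hv
            by_cases hadj : G.Adj y v
            · exact hc.2 (by simp [hN, hadj])
            · rw [if_neg hadj] at hv; exact hv rfl
        · have hz : ∀ v, A u v = 0 := fun v => hAuv u v hu hu'
          rw [finsum_congr hz, finsum_zero, hmxu u hu hu']
    · intro v
      by_cases hv : v = x
      · rw [hv, finsum_eq_single _ x ?_, hAxx, hmyx]
        intro u hu
        by_cases hu' : u = y
        · rw [hu']; exact hAyx
        · exact hAuv u x hu hu'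
      · by_cases hv' : v = y
        · rw [hv', finsum_eq_sum_of_support_subset _ (s := {x, y}) ?_]
          · rw [Finset.sum_pair hxy', hAxy, hAyy, hmyy]; ring
          · intro u hu
            simp only [Function.mem_support, ne_eq] at hu
            simp only [Finset.coe_insert, Set.mem_insert_iff, Finset.mem_coe,
              Finset.mem_singleton]
            by_contra hc
            push_neg at hc
            exact hu (hAuv u y hc.1 hc.2)
        · rw [finsum_eq_single _ y ?_, hAyv v hv hv', hmyv v hv']
          intro u hu
          by_cases hux : u = x
          · rw [hux]; exact hAxv v hv hv'
          · exact hAuv u v hux hu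
  have hcost : cost G A = α + ((d:ℝ) - 2) * e := by
    have hs : ∀ u v, A u v ≠ 0 → u ∈ insert y N ∧ v ∈ insert y N := by
      intro u v h
      constructor
      · by_cases hu : u = x
        · rw [hu]; exact Finset.mem_insert_of_mem hxN
        by_cases hu' : u = y
        · rw [hu']; exact Finset.mem_insert_self _ _
        · exact absurd (hAuv u v hu hu') h
      · by_cases hu : u = x
        · rw [hu] at h
          by_cases hvx : v = x
          · rw [hvx]; exact Finset.mem_insert_of_mem hxN
          by_cases hvy : v = y
          · rw [hvy]; exact Finset.mem_insert_self _ _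
          · exact absurd (hAxv v hvx hvy) h
        by_cases hu' : u = y
        · rw [hu'] at h
          by_cases hvx : v = x
          · rw [hvx]; exact Finset.mem_insert_of_mem hxN
          by_cases hvy : v = y
          · rw [hvy]; exact Finset.mem_insert_self _ _
          · rw [hAyv v hvx hvy] at h
            by_cases hadj : G.Adj y v
            · exact Finset.mem_insert_of_mem (by simp [hN, hadj])
            · rw [if_neg hadj] at h; exact absurd rfl h
        · exact absurd (hAuv u v hu hu') h
    rw [cost_eq_sum hs]
    have hdyy : (G.dist y y : ℝ) = 0 := by rw [SimpleGraph.dist_self]; norm_num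
    have hdxy : (G.dist x y : ℝ) = 1 := by
      rw [SimpleGraph.dist_eq_one_iff_adj.mpr hxy]; norm_num
    have hrowx : ∑ v ∈ insert y N, A x v * (G.dist x v : ℝ) = α - e := by
      rw [Finset.sum_insert hyN, hAxy, hdxy]
      have h2 : ∑ v ∈ N, A x v * (G.dist x v : ℝ) = 0 := by
        refine Finset.sum_eq_zero fun v hv => ?_
        by_cases hvx : v = x
        · rw [hvx, SimpleGraph.dist_self]
          norm_num
        · have hvy : v ≠ y := by rintro rfl; exact hyN hv
          rw [hAxv v hvx hvy, zero_mul]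
      rw [h2, add_zero, mul_one]
    have hrowy : ∑ v ∈ insert y N, A y v * (G.dist y v : ℝ) = ((d:ℝ) - 1) * e := by
      rw [Finset.sum_insert hyN, hAyy, hdyy, mul_zero, zero_add]
      have hterm : ∀ v ∈ N, A y v * (G.dist y v : ℝ) = if v = x then 0 else e := by
        intro v hv
        have hvy : v ≠ y := by rintro rfl; exact hyN hv
        have hadj : G.Adj y v := by simpa [hN] using hv
        have : (G.dist y v : ℝ) = 1 := by
          rw [SimpleGraph.dist_eq_one_iff_adj.mpr hadj]; norm_num
        rw [this, mul_one]
        by_cases hvx : v = x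
        · rw [if_pos hvx, hvx, hAyx]
        · rw [if_neg hvx, hAyv v hvx hvy, if_pos hadj]
      rw [Finset.sum_congr rfl hterm, ← Finset.add_sum_erase _ _ hxN, if_pos rfl, zero_add]
      have h2 : ∀ v ∈ N.erase x, (if v = x then (0:ℝ) else e) = e := fun v hv =>
        if_neg (Finset.ne_of_mem_erase hv)
      rw [Finset.sum_congr rfl h2, Finset.sum_const, Finset.card_erase_of_mem hxN, hdN,
        nsmul_eq_mul]
      push_cast [Nat.cast_sub hd1]
      ring
    rw [Finset.sum_insert hyN, hrowy, ← Finset.add_sum_erase _ _ hxN, hrowx]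
    have hrow0 : ∑ u ∈ N.erase x, ∑ v ∈ insert y N, A u v * (G.dist u v : ℝ) = 0 := by
      refine Finset.sum_eq_zero fun u hu => Finset.sum_eq_zero fun v _ => ?_
      have hux : u ≠ x := Finset.ne_of_mem_erase hu
      have huy : u ≠ y := by
        rintro rfl; exact hyN (Finset.mem_of_mem_erase hu)
      rw [hAuv u v hux huy, zero_mul]
    rw [hrow0]
    ring
  have hW : W G (mu G α x) (mu G α y) ≤ α + ((d:ℝ) - 2) * e :=
    (W_le_cost hcoup).trans hcost.le
  rw [kIdle, le_div_iff₀ h1α]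
  have h2e : 2 / (d:ℝ) * (1 - α) = 2 * e := by
    rw [he]; ring
  rw [h2e]
  nlinarith [hed]

end DegOne

end RicciFlatPaper
namespace RicciFlatPaper

variable {V : Type*}

open SimpleGraph

section NegCase

variable {G : SimpleGraph V} {x y : V}

lemma not_flat_of_big_degrees (hG : G.Connected) (hxy : G.Adj x y)
    (hfx : (G.neighborSet x).Finite) (hfy : (G.neighborSet y).Finite)
    (hdx : 2 ≤ deg G x) (hdy : 2 ≤ deg G y)
    (hneg : (2:ℝ)/(deg G x : ℝ) + 2/(deg G y : ℝ) - 2 < 0)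
    (hcyc : ¬ (EdgeInCycle G 3 x y ∨ EdgeInCycle G 4 x y ∨ EdgeInCycle G 5 x y)) :
    ¬ HasRicci G x y 0 := by
  classical
  have hc3 : ¬ EdgeInCycle G 3 x y := fun h => hcyc (Or.inl h)
  have hyNx : y ∈ hfx.toFinset := by simp [hxy]
  have hxNy : x ∈ hfy.toFinset := by simp [hxy.symm]
  set s : Finset V := hfx.toFinset.erase y with hsdef
  have hcards : s.card = deg G x - 1 := by
    rw [hsdef, Finset.card_erase_of_mem hyNx, ← deg_eq_card hfx]
  have hsne : s.Nonempty := by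
    rw [← Finset.card_pos, hcards]
    omega
  have hmem : ∀ a ∈ s, G.Adj x a ∧ a ≠ y := by
    intro a ha
    rw [hsdef, Finset.mem_erase] at ha
    exact ⟨by simpa using ha.2, ha.1⟩
  set f : V → ℝ := fAux G s hsne with hf
  have hlip : Lip1 G f := fAux_lip hG hsne
  -- f values
  have hfa : ∀ a ∈ s, f a = 3 := by
    intro a ha
    rw [hf, fAux_eq_of_inf hsne (k := 0) ?_ (by norm_num)]
    · norm_num
    · refine Nat.le_antisymm ?_ (Nat.zero_le _)
      refine le_trans (Finset.inf'_le _ ha) ?_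
      rw [SimpleGraph.dist_self]
  have hfx2 : f x = 2 := by
    obtain ⟨a0, ha0⟩ := id hsne
    rw [hf, fAux_eq_of_inf hsne (k := 1) ?_ (by norm_num)]
    · norm_num
    · refine Nat.le_antisymm ?_ ?_
      · refine le_trans (Finset.inf'_le _ ha0) ?_
        rw [SimpleGraph.dist_eq_one_iff_adj.mpr (hmem a0 ha0).1]
      · refine Finset.le_inf' _ _ fun a ha => ?_
        have hne : x ≠ a := (hmem a ha).1.ne
        have : G.dist x a ≠ 0 := fun h => hne (hG.dist_eq_zero_iff.mp h)
        omega
  have hfy1 : f y = 1 := by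
    obtain ⟨a0, ha0⟩ := id hsne
    rw [hf, fAux_eq_of_inf hsne (k := 2) ?_ (by norm_num)]
    · norm_num
    · refine Nat.le_antisymm ?_ ?_
      · refine le_trans (Finset.inf'_le _ ha0) ?_
        have ht := hG.dist_triangle (u := y) (v := x) (w := a0)
        rw [SimpleGraph.dist_eq_one_iff_adj.mpr hxy.symm,
          SimpleGraph.dist_eq_one_iff_adj.mpr (hmem a0 ha0).1] at ht
        omega
      · refine Finset.le_inf' _ _ fun a ha => ?_
        have hay : a ≠ y := (hmem a ha).2
        have h0 : G.dist y a ≠ 0 := fun h => hay (hG.dist_eq_zero_iff.mp h).symm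
        have h1 : G.dist y a ≠ 1 := by
          intro h
          exact hc3 (edgeInCycle3 hxy (SimpleGraph.dist_eq_one_iff_adj.mp h)
            (hmem a ha).1.symm)
        omega
  have hfb : ∀ b, G.Adj y b → b ≠ x → f b = 0 := by
    intro b hb hbx
    rw [hf]
    refine fAux_eq_zero hsne fun a ha => ?_
    exact dist_ge_three hG hxy hcyc (hmem a ha).1 (hmem a ha).2 hb hbx
  -- degrees as reals
  set D1 : ℝ := (deg G x : ℝ) with hD1
  set D2 : ℝ := (deg G y : ℝ) with hD2
  have hD1_2 : (2:ℝ) ≤ D1 := by rw [hD1]; exact_mod_cast hdx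
  have hD2_2 : (2:ℝ) ≤ D2 := by rw [hD2]; exact_mod_cast hdy
  have hD1_0 : D1 ≠ 0 := by linarith
  have hD2_0 : D2 ≠ 0 := by linarith
  -- neighbor sums of f
  have hsumx : ∑ z ∈ hfx.toFinset, f z = 1 + 3 * (D1 - 1) := by
    have : hfx.toFinset = insert y s := by
      rw [hsdef, Finset.insert_erase hyNx]
    rw [this, Finset.sum_insert (Finset.notMem_erase _ _), hfy1,
      Finset.sum_congr rfl hfa, Finset.sum_const, hcards, nsmul_eq_mul, hD1]
    push_cast [Nat.cast_sub (by omega : 1 ≤ deg G x), ← deg_eq_card hfx]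
    ring
  have hsumy : ∑ z ∈ hfy.toFinset, f z = 2 := by
    have : hfy.toFinset = insert x (hfy.toFinset.erase x) := by
      rw [Finset.insert_erase hxNy]
    rw [this, Finset.sum_insert (Finset.notMem_erase _ _), hfx2]
    have hz : ∀ b ∈ hfy.toFinset.erase x, f b = 0 := by
      intro b hb
      have hbx : b ≠ x := Finset.ne_of_mem_erase hb
      have hby : G.Adj y b := by
        have := Finset.mem_of_mem_erase hb
        simpa using this
      exact hfb b hby hbx
    rw [Finset.sum_congr rfl hz, Finset.sum_const, smul_zero, add_zero]
  refine not_hasRicci_zero_of_ratio_le (c := 2/D1 + 2/D2 - 2) hneg ?_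
  intro α hα2 hα1
  have h1α : (0:ℝ) < 1 - α := by linarith
  have hnex : (G.neighborSet x).Nonempty := ⟨y, hxy⟩
  have hney : (G.neighborSet y).Nonempty := ⟨x, hxy.symm⟩
  have hp1 : IsProbDist (mu G α x) := mu_isProbDist hfx hnex (by linarith) hα1.le
  have hp2 : IsProbDist (mu G α y) := mu_isProbDist hfy hney (by linarith) hα1.le
  have hcoup := prod_coupling hp1 hp2
  have hWge : 1 + (1 - α) * (2 - 2/D1 - 2/D2) ≤ W G (mu G α x) (mu G α y) := by
    have h := le_W hlip hcoup
    rw [finsum_mul_mu hfx f, finsum_mul_mu hfy f, hsumx, hsumy, hfx2, hfy1,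
      ← hD1, ← hD2] at h
    refine le_trans (le_of_eq ?_) h
    field_simp
    ring
  rw [kIdle, div_le_iff₀ h1α]
  nlinarith [hWge]

end NegCase

end RicciFlatPaper

namespace RicciFlatPaper

variable {V : Type*}

/-- in a Ricci-flat graph (max degree ≤ 4) with no edge having both endpoints
of degree 2, every edge is in a `C₃`, `C₄` or `C₅`. -/
theorem ricciFlat_every_edge_in_short_cycle (G : SimpleGraph V) (hG : G.Connected)
    (hmax : ∀ v : V, deg G v ≤ 4) (hflat : RicciFlat G)
    (hno22 : ∀ x y : V, G.Adj x y → ¬ (deg G x = 2 ∧ deg G y = 2)) :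
    ∀ x y : V, G.Adj x y →
      EdgeInCycle G 3 x y ∨ EdgeInCycle G 4 x y ∨ EdgeInCycle G 5 x y := by
  intro x y hxy
  by_contra hcyc
  by_cases hfx : (G.neighborSet x).Finite
  · by_cases hfy : (G.neighborSet y).Finite
    · have hdx1 : 1 ≤ deg G x := by
        rw [deg_eq_card hfx]
        exact Finset.card_pos.mpr ⟨y, by simp [hxy]⟩
      have hdy1 : 1 ≤ deg G y := by
        rw [deg_eq_card hfy]
        exact Finset.card_pos.mpr ⟨x, by simp [hxy.symm]⟩
      by_cases hdx : deg G x = 1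
      · exact not_flat_of_deg_one hG hxy hfx hfy hdx (hflat x y hxy)
      by_cases hdy : deg G y = 1
      · exact not_flat_of_deg_one hG hxy.symm hfy hfx hdy (hflat y x hxy.symm)
      · have hdx2 : 2 ≤ deg G x := by omega
        have hdy2 : 2 ≤ deg G y := by omega
        have h22 := hno22 x y hxy
        have h4x := hmax x
        have h4y := hmax y
        have hx3 : deg G x = 2 ∨ deg G x = 3 ∨ deg G x = 4 := by omega
        have hy3 : deg G y = 2 ∨ deg G y = 3 ∨ deg G y = 4 := by omega
        have hneg : (2:ℝ)/(deg G x : ℝ) + 2/(deg G y : ℝ) - 2 < 0 := by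
          rcases hx3 with h|h|h <;> rcases hy3 with h'|h'|h' <;>
            rw [h, h'] at h22 ⊢ <;>
            norm_num <;> exact absurd ⟨rfl, rfl⟩ h22
        exact not_flat_of_big_degrees hG hxy hfx hfy hdx2 hdy2 hneg hcyc (hflat x y hxy)
    · exact not_flat_of_infinite_finite hG hxy.symm hfy hfx (hflat y x hxy.symm)
  · by_cases hfy : (G.neighborSet y).Finite
    · exact not_flat_of_infinite_finite hG hxy hfx hfy (hflat x y hxy)
    · exact not_flat_of_both_infinite hG hxy hfx hfy (hflat x y hxy)


end RicciFlatPaper
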